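/- Fix α = 1 and 0 < β < 1, and let L be even. Let ν_A be the product probability measure on configurations under which no site carries a B particle, every even site carries an A particle with probability 1, and every odd site carries an A particle with probability 1−β (and is empty otherwise), independently over sites; let ν_B be its image under interchanging A and B together with space reflection (no A particles, every odd site carries a B particle with probability 1, every even site with probability 1−β). Then both ν_A and ν_B are invariant for the sublattice bridge chain: ν_A K_{L,1,β} = ν_A and ν_B K_{L,1,β} = ν_B. In each of these stationary states one species is completely expelled from the system even on a finite lattice. -/

import Mathlib

open MeasureTheory ProbabilityTheory ENNReal

/-- The state of a single lattice site: empty, or occupied by an `A` or a `B` particle. -/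
inductive St : Type
  | vac : St
  | A : St
  | B : St
  deriving DecidableEq

instance : Fintype St := ⟨{St.vac, St.A, St.B}, fun x => by cases x <;> simp⟩

instance : MeasurableSpace St := ⊤
instance : MeasurableSingletonClass St := ⟨fun _ => trivial⟩

/-- Configurations of the two-species sublattice bridge model on `{1,…,L}`
(represented 0-indexed as `Fin L`, site `i` of the paper being index `i-1`). -/
abbrev Cfg (L : ℕ) := Fin L → St

/-- The deterministic pair-exchange rule `A0 → 0A`, `0B → B0`, `AB → BA`
(all other pair contents unchanged). -/
def exch : St × St → St × St
  | (St.A, St.vac) => (St.vac, St.A)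
  | (St.vac, St.B) => (St.B, St.vac)
  | (St.A, St.B) => (St.B, St.A)
  | p => p

/-- Deterministic bulk part of the first half-step: the exchange rule is applied to
the pairs of (paper) sites `(2i, 2i+1)` for `0 < i < L/2`, i.e. to 0-indexed pairs
`(j, j+1)` with `j` odd and `j + 2 < L`. -/
def sweep1 (L : ℕ) (η : Cfg L) : Cfg L := fun j =>
  if hl : (j : ℕ) % 2 = 1 ∧ (j : ℕ) + 2 < L then
    (exch (η j, η ⟨(j : ℕ) + 1, by omega⟩)).1
  else if hr : (j : ℕ) % 2 = 0 ∧ 0 < (j : ℕ) ∧ (j : ℕ) + 1 < L then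
    (exch (η ⟨(j : ℕ) - 1, by have := j.isLt; omega⟩, η j)).2
  else η j

/-- Second half-step: the exchange rule is applied to the pairs of (paper) sites
`(2i-1, 2i)` for `0 < i ≤ L/2`, i.e. to 0-indexed pairs `(j, j+1)` with `j` even. -/
def sweep2 (L : ℕ) (η : Cfg L) : Cfg L := fun j =>
  if hl : (j : ℕ) % 2 = 0 ∧ (j : ℕ) + 1 < L then
    (exch (η j, η ⟨(j : ℕ) + 1, by omega⟩)).1
  else if hr : (j : ℕ) % 2 = 1 then
    (exch (η ⟨(j : ℕ) - 1, by have := j.isLt; omega⟩, η j)).2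
  else η j

/-- Boundary part of the first half-step, given the outcomes of the four independent
Bernoulli experiments: `a1` (creation of `A` at site 1, prob. `α`), `b1` (annihilation of
`B` at site 1, prob. `β`), `aL` (creation of `B` at site `L`, prob. `α`), `bL`
(annihilation of `A` at site `L`, prob. `β`). -/
def bdry (L : ℕ) (a1 b1 aL bL : Bool) (η : Cfg L) : Cfg L := fun j =>
  if (j : ℕ) = 0 then
    match η j with
    | St.vac => if a1 then St.A else St.vac
    | St.B => if b1 then St.vac else St.B
    | s => s
  else if (j : ℕ) = L - 1 then
    match η j with
    | St.vac => if aL then St.B else St.vac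
    | St.A => if bL then St.vac else St.A
    | s => s
  else η j

/-- A Bernoulli random bit with success probability `p` (a real number, clamped to `[0,1]`). -/
noncomputable def bern (p : ℝ) : PMF Bool :=
  PMF.bernoulli (min (Real.toNNReal p) 1) (min_le_right _ _)

/-- One time step of the sublattice bridge model with creation probability `a` and
annihilation probability `b`: the stochastic boundary events and the deterministic
bulk sweep of the first half-step, followed by the deterministic second half-step.
This is the Markov transition kernel `K_{L,α,β}` in `PMF` form. -/
noncomputable def stepPMF (L : ℕ) (a b : ℝ) (η : Cfg L) : PMF (Cfg L) :=
  (bern a).bind fun a1 =>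
    (bern b).bind fun b1 =>
      (bern a).bind fun aL =>
        (bern b).bind fun bL =>
          PMF.pure (sweep2 L (sweep1 L (bdry L a1 b1 aL bL η)))



/-- Single-site marginal of the symmetry-broken product measure `ν_A` on the line `α = 1`:
no `B` particles, every even paper site (odd 0-indexed site) carries an `A` particle with
probability `1`, every odd paper site (even 0-indexed site) carries an `A` particle with
probability `1 − β` and is empty otherwise. -/
noncomputable def brokenSiteMeasureA (β : ℝ) (L : ℕ) (j : Fin L) : Measure St :=
  if (j : ℕ) % 2 = 1 then Measure.dirac St.A
  else
    ENNReal.ofReal (1 - β) • Measure.dirac St.A +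
      ENNReal.ofReal β • Measure.dirac St.vac

/-- Single-site marginal of the symmetry-broken product measure `ν_B` on the line `α = 1`
(the image of `ν_A` under species interchange combined with space reflection): no `A`
particles, every odd paper site (even 0-indexed site) carries a `B` particle with
probability `1`, every even paper site (odd 0-indexed site) with probability `1 − β`. -/
noncomputable def brokenSiteMeasureB (β : ℝ) (L : ℕ) (j : Fin L) : Measure St :=
  if (j : ℕ) % 2 = 0 then Measure.dirac St.B
  else
    ENNReal.ofReal (1 - β) • Measure.dirac St.B +
      ENNReal.ofReal β • Measure.dirac St.vac

namespace SBaux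

lemma bern_one : bern 1 = PMF.pure true := by
  have h : min (Real.toNNReal (1:ℝ)) 1 = 1 := by simp
  ext b
  cases b <;> simp [bern, PMF.bernoulli_apply, PMF.pure_apply, h]

lemma bern_true {β : ℝ} (h1 : β ≤ 1) : bern β true = ENNReal.ofReal β := by
  have h : min (Real.toNNReal β) 1 = Real.toNNReal β := by
    simp [h1]
  simp [bern, PMF.bernoulli_apply, h, ENNReal.ofReal]

lemma bern_false {β : ℝ} (h0 : 0 ≤ β) (h1 : β ≤ 1) :
    bern β false = ENNReal.ofReal (1 - β) := by
  have h : min (Real.toNNReal β) 1 = Real.toNNReal β := by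
    simp [h1]
  have : ENNReal.ofReal (1 - β) = 1 - ENNReal.ofReal β := by
    rw [ENNReal.ofReal_sub _ h0, ENNReal.ofReal_one]
  rw [this]; simp only [bern, PMF.bernoulli_apply, h, cond_false]; rfl

/-- Generic invariance criterion. -/
lemma invariant_of (β : ℝ) (hβ0 : 0 ≤ β) (hβ1 : β ≤ 1) (L : ℕ)
    (m : Fin L → Measure St) (hm : ∀ j, IsProbabilityMeasure (m j))
    (Supp : Set (Cfg L))
    (hnull : Measure.pi m Suppᶜ = 0)
    (Φ : Cfg L → Bool → Cfg L)
    (hstep : ∀ η ∈ Supp, stepPMF L 1 β η = (bern β).bind fun b => PMF.pure (Φ η b))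
    (hid : ∀ ξ : Cfg L,
      ENNReal.ofReal β * Measure.pi m {η | Φ η true = ξ}
        + ENNReal.ofReal (1 - β) * Measure.pi m {η | Φ η false = ξ}
        = Measure.pi m {ξ}) :
    (Measure.pi m).bind (fun η => (stepPMF L 1 β η).toMeasure) = Measure.pi m := by
  haveI := hm
  apply Measure.ext_of_singleton
  intro ξ
  rw [Measure.bind_apply (measurableSet_singleton ξ)
    (Measurable.of_discrete (f := fun η => (stepPMF L 1 β η).toMeasure)).aemeasurable]
  have hS : Supp ∈ ae (Measure.pi m) := by
    rw [mem_ae_iff]; exact hnull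
  have hae : (fun η => (stepPMF L 1 β η).toMeasure {ξ}) =ᵐ[Measure.pi m]
      (fun η => ENNReal.ofReal β * ({η' | Φ η' true = ξ}.indicator 1 η)
        + ENNReal.ofReal (1 - β) * ({η' | Φ η' false = ξ}.indicator 1 η)) := by
    refine Filter.eventually_of_mem hS (fun η hη => ?_)
    dsimp only
    rw [hstep η hη, PMF.toMeasure_apply_singleton _ ξ (measurableSet_singleton ξ),
      PMF.bind_apply, tsum_bool, bern_true hβ1, bern_false hβ0 hβ1]
    simp only [PMF.pure_apply, Set.indicator_apply, Set.mem_setOf_eq, Pi.one_apply]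
    simp only [@eq_comm _ ξ]
    ring
  rw [lintegral_congr_ae hae]
  rw [lintegral_add_left (Measurable.of_discrete)]
  rw [lintegral_const_mul _ (Measurable.of_discrete), lintegral_const_mul _ (Measurable.of_discrete)]
  rw [lintegral_indicator_one MeasurableSet.of_discrete,
      lintegral_indicator_one MeasurableSet.of_discrete]
  exact hid ξ

end SBaux

namespace SBaux

lemma exch_A_fst {x : St} (hx : x ≠ St.B) : (exch (St.A, x)).1 = x := by
  cases x <;> simp_all [exch]

lemma exch_A_snd {x : St} (hx : x ≠ St.B) : (exch (St.A, x)).2 = St.A := by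
  cases x <;> simp_all [exch]

/-- Support of `ν_A`: all odd (0-indexed) sites carry `A`, no site carries `B`. -/
def SuppA (L : ℕ) : Set (Cfg L) :=
  {η | ∀ j : Fin L, ((j : ℕ) % 2 = 1 → η j = St.A) ∧ η j ≠ St.B}

/-- The deterministic evolution of a configuration in the support of `ν_A`,
given the boundary bit `b` (annihilation of the `A` at site `L`). -/
def PhiA (L : ℕ) (η : Cfg L) (b : Bool) : Cfg L := fun j =>
  if (j : ℕ) % 2 = 1 then St.A
  else if h : (j : ℕ) + 2 < L then η ⟨(j : ℕ) + 2, h⟩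
  else if b then St.vac else St.A

lemma bdryA {L : ℕ} (hE : L % 2 = 0) (hpos : 0 < L) {η : Cfg L} (hη : η ∈ SuppA L)
    (b1 aL bL : Bool) (j : Fin L) :
    bdry L true b1 aL bL η j =
      if (j : ℕ) = L - 1 then (if bL then St.vac else St.A)
      else if (j : ℕ) = 0 then St.A else η j := by
  obtain ⟨hodd, hB⟩ := hη j
  have hjL := j.isLt
  by_cases h0 : (j : ℕ) = 0
  · have hL1 : ¬ ((j : ℕ) = L - 1) := by omega
    rcases hx : η j with _ | _ | _
    · simp [bdry, h0, hL1, hx]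
      exact fun h => absurd h (by omega)
    · simp [bdry, h0, hL1, hx]
      exact fun h => absurd h (by omega)
    · exact absurd hx hB
  · by_cases hL1 : (j : ℕ) = L - 1
    · have : η j = St.A := hodd (by omega)
      simp [bdry, h0, hL1, this]
      exact fun h => absurd h (by omega)
    · simp [bdry, h0, hL1]

lemma chiA {L : ℕ} (hE : L % 2 = 0) (hpos : 0 < L) {η : Cfg L} (hη : η ∈ SuppA L)
    (b1 aL bL : Bool) (j : Fin L) :
    sweep1 L (bdry L true b1 aL bL η) j =
      if (j : ℕ) % 2 = 1 then
        (if h : (j : ℕ) + 2 < L then η ⟨(j : ℕ) + 1, by omega⟩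
         else if bL then St.vac else St.A)
      else St.A := by
  have hjL := j.isLt
  by_cases hj : (j : ℕ) % 2 = 1
  · by_cases h2 : (j : ℕ) + 2 < L
    · rw [sweep1, dif_pos ⟨hj, h2⟩]
      rw [bdryA hE hpos hη b1 aL bL j, bdryA hE hpos hη b1 aL bL ⟨(j : ℕ) + 1, by omega⟩]
      simp only [Fin.val_mk]
      rw [if_neg (by omega), if_neg (by omega), if_neg (by omega), if_neg (by omega)]
      rw [(hη j).1 hj, if_pos hj, dif_pos h2]
      exact exch_A_fst (hη _).2
    · have hL1 : (j : ℕ) = L - 1 := by omega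
      rw [sweep1, dif_neg (by omega), dif_neg (by omega)]
      rw [bdryA hE hpos hη b1 aL bL j, if_pos hL1, if_pos hj, dif_neg h2]
  · have h1 : (j : ℕ) + 1 < L := by omega
    by_cases h0 : (j : ℕ) = 0
    · rw [sweep1, dif_neg (by omega), dif_neg (by omega)]
      rw [bdryA hE hpos hη b1 aL bL j, if_neg (by omega), if_pos h0, if_neg hj]
    · rw [sweep1, dif_neg (by omega), dif_pos ⟨by omega, by omega, h1⟩]
      rw [bdryA hE hpos hη b1 aL bL ⟨(j : ℕ) - 1, by omega⟩,
        bdryA hE hpos hη b1 aL bL j]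
      simp only [Fin.val_mk]
      rw [if_neg (by omega), if_neg (by omega), if_neg (by omega), if_neg h0]
      have hA : η ⟨(j : ℕ) - 1, by omega⟩ = St.A :=
        (hη _).1 (by simp only [Fin.val_mk]; omega)
      rw [hA, if_neg hj]
      exact exch_A_snd (hη j).2

lemma dynA {L : ℕ} (hE : L % 2 = 0) (hpos : 0 < L) {η : Cfg L} (hη : η ∈ SuppA L)
    (b1 aL bL : Bool) :
    sweep2 L (sweep1 L (bdry L true b1 aL bL η)) = PhiA L η bL := by
  funext j
  have hjL := j.isLt
  by_cases hj : (j : ℕ) % 2 = 1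
  · rw [sweep2, dif_neg (by omega), dif_pos hj]
    rw [chiA hE hpos hη b1 aL bL ⟨(j : ℕ) - 1, by omega⟩, chiA hE hpos hη b1 aL bL j]
    simp only [Fin.val_mk]
    rw [if_neg (by omega), if_pos hj]
    rw [PhiA, if_pos hj]
    by_cases h2 : (j : ℕ) + 2 < L
    · rw [dif_pos h2]
      exact exch_A_snd (hη _).2
    · rw [dif_neg h2]
      cases bL <;> simp [exch]
  · have h1 : (j : ℕ) + 1 < L := by omega
    rw [sweep2, dif_pos ⟨by omega, h1⟩]
    rw [chiA hE hpos hη b1 aL bL j, chiA hE hpos hη b1 aL bL ⟨(j : ℕ) + 1, by omega⟩]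
    simp only [Fin.val_mk]
    rw [if_neg hj, if_pos (by omega)]
    rw [PhiA, if_neg hj]
    by_cases h2 : (j : ℕ) + 2 < L
    · rw [dif_pos (by omega : (j : ℕ) + 1 + 2 < L), dif_pos h2]
      exact exch_A_fst (hη _).2
    · rw [dif_neg (by omega : ¬ ((j : ℕ) + 1 + 2 < L)), dif_neg h2]
      cases bL <;> simp [exch]

lemma stepA {L : ℕ} (β : ℝ) (hE : L % 2 = 0) (hpos : 0 < L) {η : Cfg L}
    (hη : η ∈ SuppA L) :
    stepPMF L 1 β η = (bern β).bind fun b => PMF.pure (PhiA L η b) := by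
  rw [stepPMF, bern_one]
  rw [PMF.pure_bind]
  simp only [PMF.pure_bind, dynA hE hpos hη]
  exact PMF.bind_const _ _

end SBaux

namespace SBaux

lemma one_sub_add {β : ℝ} (h0 : 0 ≤ β) (h1 : β ≤ 1) :
    ENNReal.ofReal (1 - β) + ENNReal.ofReal β = 1 := by
  rw [← ENNReal.ofReal_add (by linarith) h0]; norm_num

lemma mA_odd {β : ℝ} {L : ℕ} {j : Fin L} (hj : (j : ℕ) % 2 = 1) :
    brokenSiteMeasureA β L j = Measure.dirac St.A := if_pos hj

lemma mA_even {β : ℝ} {L : ℕ} {j : Fin L} (hj : (j : ℕ) % 2 = 0) :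
    brokenSiteMeasureA β L j =
      ENNReal.ofReal (1 - β) • Measure.dirac St.A + ENNReal.ofReal β • Measure.dirac St.vac :=
  if_neg (by omega)

lemma mixA_apply (β : ℝ) (s : Set St) :
    (ENNReal.ofReal (1 - β) • Measure.dirac St.A + ENNReal.ofReal β • Measure.dirac St.vac) s
      = ENNReal.ofReal (1 - β) * s.indicator 1 St.A + ENNReal.ofReal β * s.indicator 1 St.vac := by
  simp [Measure.dirac_apply]

lemma mA_prob (β : ℝ) (h0 : 0 ≤ β) (h1 : β ≤ 1) (L : ℕ) (j : Fin L) :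
    IsProbabilityMeasure (brokenSiteMeasureA β L j) := by
  constructor
  by_cases hj : (j : ℕ) % 2 = 1
  · rw [mA_odd hj]; simp
  · rw [mA_even (by omega), mixA_apply]
    simp [one_sub_add h0 h1]

lemma nullA (β : ℝ) (h0 : 0 ≤ β) (h1 : β ≤ 1) (L : ℕ) :
    Measure.pi (brokenSiteMeasureA β L) (SuppA L)ᶜ = 0 := by
  haveI := mA_prob β h0 h1 L
  have hSupp : SuppA L = Set.univ.pi
      (fun j : Fin L => if (j : ℕ) % 2 = 1 then ({St.A} : Set St) else {St.A, St.vac}) := by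
    ext η
    simp only [SuppA, Set.mem_setOf_eq, Set.mem_pi, Set.mem_univ, true_implies]
    refine forall_congr' fun j => ?_
    by_cases hj : (j : ℕ) % 2 = 1
    · rw [if_pos hj]; cases η j <;> simp [hj]
    · rw [if_neg hj]; cases η j <;> simp [hj]
  rw [hSupp, prob_compl_eq_zero_iff (MeasurableSet.univ_pi fun j => .of_discrete),
    Measure.pi_pi]
  apply Finset.prod_eq_one
  intro j _
  by_cases hj : (j : ℕ) % 2 = 1
  · rw [if_pos hj, mA_odd hj]; simp
  · rw [if_neg hj, mA_even (by omega), mixA_apply]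
    simp [one_sub_add h0 h1]

/-- Constraint sets for the preimage of a configuration under `PhiA`. -/
def TA (L : ℕ) (ξ : Cfg L) : Fin L → Set St := fun j =>
  if h : (j : ℕ) % 2 = 0 ∧ 2 ≤ (j : ℕ) then
    {ξ ⟨(j : ℕ) - 2, by have := j.isLt; omega⟩} else Set.univ

/-- Compatibility condition for `ξ` to be reachable. -/
def PA (L : ℕ) (ξ : Cfg L) (b : Bool) : Prop :=
  ∀ j : Fin L, ((j : ℕ) % 2 = 1 → ξ j = St.A) ∧
    ((j : ℕ) % 2 = 0 → ¬ ((j : ℕ) + 2 < L) → ξ j = (if b then St.vac else St.A))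

lemma setA_pos {L : ℕ} {ξ : Cfg L} {b : Bool} (h : PA L ξ b) :
    {η : Cfg L | PhiA L η b = ξ} = Set.univ.pi (TA L ξ) := by
  ext η
  simp only [Set.mem_setOf_eq, Set.mem_pi, Set.mem_univ, true_implies]
  constructor
  · intro hΦ j
    rw [TA]
    split_ifs with hc
    · obtain ⟨hc0, hc2⟩ := hc
      have hjL := j.isLt
      have h1 := congrFun hΦ ⟨(j : ℕ) - 2, by omega⟩
      simp only [PhiA, Fin.val_mk] at h1
      rw [if_neg (by omega), dif_pos (by omega : (j : ℕ) - 2 + 2 < L)] at h1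
      have h2 : (⟨(j : ℕ) - 2 + 2, by omega⟩ : Fin L) = j := Fin.ext (by simp; omega)
      rw [h2] at h1
      exact Set.mem_singleton_iff.2 h1
    · trivial
  · intro hT
    funext j
    have hjL := j.isLt
    simp only [PhiA]
    by_cases hj : (j : ℕ) % 2 = 1
    · rw [if_pos hj]; exact ((h j).1 hj).symm
    · rw [if_neg hj]
      by_cases h2 : (j : ℕ) + 2 < L
      · rw [dif_pos h2]
        have h3 := hT ⟨(j : ℕ) + 2, h2⟩
        rw [TA] at h3
        rw [dif_pos ⟨by simp only [Fin.val_mk]; omega, by simp only [Fin.val_mk]; omega⟩] at h3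
        rw [Set.mem_singleton_iff] at h3
        rw [h3]
        exact congrArg ξ (Fin.ext (by simp only [Fin.val_mk]; omega))
      · rw [dif_neg h2]
        exact ((h j).2 (by omega) h2).symm

lemma setA_neg {L : ℕ} {ξ : Cfg L} {b : Bool} (h : ¬ PA L ξ b) :
    {η : Cfg L | PhiA L η b = ξ} = ∅ := by
  ext η
  simp only [Set.mem_setOf_eq, Set.mem_empty_iff_false, iff_false]
  intro hΦ
  apply h
  intro j
  constructor
  · intro hj
    rw [← hΦ]; simp [PhiA, hj]
  · intro h0 h2
    rw [← hΦ]
    simp only [PhiA]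
    rw [if_neg (by omega), dif_neg h2]

/-- The reindexing permutation: even sites are shifted down by two (cyclically),
odd sites are fixed. -/
def rhoA (L : ℕ) (hL2 : 2 ≤ L) (hE : L % 2 = 0) : Equiv.Perm (Fin L) where
  toFun j := if h : (j : ℕ) % 2 = 0 ∧ 2 ≤ (j : ℕ) then ⟨(j : ℕ) - 2, by have := j.isLt; omega⟩
    else if (j : ℕ) % 2 = 0 then ⟨L - 2, by omega⟩ else j
  invFun j := if h : (j : ℕ) % 2 = 0 ∧ (j : ℕ) + 2 < L then ⟨(j : ℕ) + 2, by omega⟩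
    else if (j : ℕ) % 2 = 0 then ⟨0, by omega⟩ else j
  left_inv j := by
    have hjL := j.isLt
    by_cases h1 : (j : ℕ) % 2 = 0 ∧ 2 ≤ (j : ℕ)
    · simp only [dif_pos h1, Fin.val_mk]
      rw [dif_pos ⟨by omega, by omega⟩]
      exact Fin.ext (by simp only [Fin.val_mk]; omega)
    · by_cases h2 : (j : ℕ) % 2 = 0
      · simp only [dif_neg h1, if_pos h2, Fin.val_mk]
        rw [dif_neg (by omega), if_pos (by omega)]
        exact Fin.ext (by simp only [Fin.val_mk]; omega)
      · simp only [dif_neg h1, if_neg h2]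
        rw [dif_neg (by omega)]
  right_inv j := by
    have hjL := j.isLt
    by_cases h1 : (j : ℕ) % 2 = 0 ∧ (j : ℕ) + 2 < L
    · simp only [dif_pos h1, Fin.val_mk]
      rw [dif_pos ⟨by omega, by omega⟩]
      exact Fin.ext (by simp only [Fin.val_mk]; omega)
    · by_cases h2 : (j : ℕ) % 2 = 0
      · simp only [dif_neg h1, if_pos h2, Fin.val_mk]
        rw [dif_neg (by omega), if_pos (by simp)]
        exact Fin.ext (by simp only [Fin.val_mk]; omega)
      · simp only [dif_neg h1, if_neg h2]
        rw [dif_neg (by omega)]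

lemma rhoA_apply (L : ℕ) (hL2 : 2 ≤ L) (hE : L % 2 = 0) (j : Fin L) :
    rhoA L hL2 hE j =
      if h : (j : ℕ) % 2 = 0 ∧ 2 ≤ (j : ℕ) then ⟨(j : ℕ) - 2, by have := j.isLt; omega⟩
      else if (j : ℕ) % 2 = 0 then ⟨L - 2, by omega⟩ else j := rfl

lemma prod_shift {M : Type*} [CommMonoid M] {L : ℕ} (hL2 : 2 ≤ L) (hE : L % 2 = 0)
    (G F : Fin L → M) (c : M)
    (hodd : ∀ j : Fin L, (j : ℕ) % 2 = 1 → G j = 1 ∧ F j = 1)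
    (hshift : ∀ j : Fin L, (j : ℕ) % 2 = 0 → 2 ≤ (j : ℕ) →
      F j = G ⟨(j : ℕ) - 2, by have := j.isLt; omega⟩)
    (hF0 : F ⟨0, by omega⟩ = 1)
    (hc : c = G ⟨L - 2, by omega⟩) :
    ∏ j, G j = c * ∏ j, F j := by
  have h1' : (∏ j, G j) = ∏ j, G (rhoA L hL2 hE j) :=
    (Equiv.prod_comp (rhoA L hL2 hE) G).symm
  have hz : (⟨0, by omega⟩ : Fin L) ∈ Finset.univ := Finset.mem_univ _
  have hρ0 : rhoA L hL2 hE ⟨0, by omega⟩ = ⟨L - 2, by omega⟩ := by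
    rw [rhoA_apply]
    rw [dif_neg (by simp), if_pos (by simp)]
  rw [h1', ← Finset.mul_prod_erase Finset.univ _ hz, hρ0, ← hc]
  congr 1
  have hstep : ∀ j ∈ Finset.univ.erase (⟨0, by omega⟩ : Fin L),
      G (rhoA L hL2 hE j) = F j := by
    intro j hj
    have hjne : (j : ℕ) ≠ 0 := by
      intro hc'
      exact (Finset.mem_erase.1 hj).1 (Fin.ext hc')
    have hjL := j.isLt
    by_cases hpar : (j : ℕ) % 2 = 1
    · have hρj : rhoA L hL2 hE j = j := by
        rw [rhoA_apply, dif_neg (by omega), if_neg (by omega)]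
      rw [hρj, (hodd j hpar).1, (hodd j hpar).2]
    · have hρj : rhoA L hL2 hE j = ⟨(j : ℕ) - 2, by omega⟩ := by
        rw [rhoA_apply, dif_pos ⟨by omega, by omega⟩]
      rw [hρj, hshift j (by omega) (by omega)]
  rw [Finset.prod_congr rfl hstep]
  exact Finset.prod_erase _ hF0

end SBaux

namespace SBaux

lemma hidA {L : ℕ} {β : ℝ} (h0 : 0 ≤ β) (h1 : β ≤ 1) (hE : L % 2 = 0) (ξ : Cfg L) :
    ENNReal.ofReal β * Measure.pi (brokenSiteMeasureA β L) {η | PhiA L η true = ξ}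
      + ENNReal.ofReal (1 - β) * Measure.pi (brokenSiteMeasureA β L) {η | PhiA L η false = ξ}
      = Measure.pi (brokenSiteMeasureA β L) {ξ} := by
  haveI := mA_prob β h0 h1 L
  have hξ : Measure.pi (brokenSiteMeasureA β L) {ξ} = ∏ j, brokenSiteMeasureA β L j {ξ j} := by
    rw [← Set.univ_pi_singleton ξ, Measure.pi_pi]
  by_cases hodd : ∀ j : Fin L, (j : ℕ) % 2 = 1 → ξ j = St.A
  case neg =>
    push_neg at hodd
    obtain ⟨j, hj, hne⟩ := hodd
    have hP : ∀ b, ¬ PA L ξ b := fun b hPA => hne ((hPA j).1 hj)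
    rw [setA_neg (hP true), setA_neg (hP false), measure_empty, mul_zero, mul_zero,
      add_zero, hξ]
    symm
    apply Finset.prod_eq_zero (Finset.mem_univ j)
    rw [mA_odd hj, Measure.dirac_apply]
    simp [Set.indicator_apply, Ne.symm hne]
  case pos =>
    rcases Nat.eq_zero_or_pos L with hL0 | hLpos
    · subst hL0
      have hP : ∀ b, PA 0 ξ b := fun b j => absurd j.isLt (by omega)
      rw [setA_pos (hP true), setA_pos (hP false), hξ]
      simp only [Measure.pi_pi]
      simp only [Finset.univ_eq_empty, Finset.prod_empty, mul_one]
      rw [add_comm, one_sub_add h0 h1]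
    · have hL2 : 2 ≤ L := by omega
      set i : Fin L := ⟨L - 2, by omega⟩ with hi
      have hival : (i : ℕ) = L - 2 := rfl
      have hieven : (i : ℕ) % 2 = 0 := by omega
      have hPAiff : ∀ b, PA L ξ b ↔ ξ i = (if b then St.vac else St.A) := by
        intro b
        constructor
        · intro hPA
          exact (hPA i).2 (by omega) (by omega)
        · intro hv j
          refine ⟨fun hj => hodd j hj, fun hj0 hj2 => ?_⟩
          have hji : j = i := Fin.ext (by have := j.isLt; omega)
          rw [hji]; exact hv
      have hprod : (∏ j, brokenSiteMeasureA β L j {ξ j})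
          = brokenSiteMeasureA β L i {ξ i} * ∏ j, brokenSiteMeasureA β L j (TA L ξ j) := by
        apply prod_shift hL2 hE
        · intro j hj
          constructor
          · rw [mA_odd hj, hodd j hj, Measure.dirac_apply]
            simp
          · rw [TA, dif_neg (by omega)]
            exact measure_univ
        · intro j hj0 hj2
          rw [TA, dif_pos ⟨hj0, hj2⟩, mA_even hj0,
            mA_even (show ((⟨(j : ℕ) - 2, by have := j.isLt; omega⟩ : Fin L) : ℕ) % 2 = 0 by
              simp only [Fin.val_mk]; omega)]
        · rw [TA, dif_neg (by simp)]
          exact measure_univ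
        · rfl
      rcases hv : ξ i with _ | _ | _
      · -- ξ i = vac
        have hPf : ¬ PA L ξ false := fun hPA => by
          have h' := (hPAiff false).1 hPA
          rw [hv] at h'
          simp at h'
        rw [setA_pos ((hPAiff true).2 (by simp [hv])), setA_neg hPf, measure_empty,
          mul_zero, add_zero, Measure.pi_pi, hξ, hprod]
        congr 1
        rw [mA_even hieven, hv, mixA_apply]
        simp [Set.indicator_apply]
      · -- ξ i = A
        have hPt : ¬ PA L ξ true := fun hPA => by
          have h' := (hPAiff true).1 hPA
          rw [hv] at h'
          simp at h'
        rw [setA_pos ((hPAiff false).2 (by simp [hv])), setA_neg hPt, measure_empty,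
          mul_zero, zero_add, Measure.pi_pi, hξ, hprod]
        congr 1
        rw [mA_even hieven, hv, mixA_apply]
        simp [Set.indicator_apply]
      · -- ξ i = B
        have hPt : ¬ PA L ξ true := fun hPA => by
          have h' := (hPAiff true).1 hPA
          rw [hv] at h'
          simp at h'
        have hPf : ¬ PA L ξ false := fun hPA => by
          have h' := (hPAiff false).1 hPA
          rw [hv] at h'
          simp at h'
        rw [setA_neg hPt, setA_neg hPf, measure_empty, mul_zero, mul_zero, add_zero, hξ]
        symm
        apply Finset.prod_eq_zero (Finset.mem_univ i)
        rw [mA_even hieven, hv, mixA_apply]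
        simp [Set.indicator_apply]

lemma invariantA (β : ℝ) (hβ0 : 0 ≤ β) (hβ1 : β ≤ 1) (L : ℕ) (hE : L % 2 = 0) :
    (Measure.pi (brokenSiteMeasureA β L)).bind
      (fun η => (stepPMF L 1 β η).toMeasure) = Measure.pi (brokenSiteMeasureA β L) := by
  rcases Nat.eq_zero_or_pos L with hL0 | hLpos
  · subst hL0
    -- on `Fin 0` every configuration is in the support
    refine invariant_of β hβ0 hβ1 0 _ (mA_prob β hβ0 hβ1 0) (SuppA 0) ?_ (PhiA 0) ?_
      (fun ξ => hidA hβ0 hβ1 hE ξ)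
    · have hS : SuppA 0 = Set.univ := by
        ext η
        simp only [SuppA, Set.mem_setOf_eq, Set.mem_univ, iff_true]
        exact fun j => j.elim0
      rw [hS, Set.compl_univ]; exact measure_empty
    · intro η hη
      apply PMF.ext
      intro x
      have huniq : ∀ (p : PMF (Cfg 0)) (a : Cfg 0), p a = 1 := by
        intro p a
        have h := p.tsum_coe
        rwa [tsum_eq_single a (fun b hb => absurd (Subsingleton.elim b a) hb)] at h
      rw [huniq, huniq]
  · refine invariant_of β hβ0 hβ1 L _ (mA_prob β hβ0 hβ1 L) (SuppA L)
      (nullA β hβ0 hβ1 L) (PhiA L) (fun η hη => stepA β hE hLpos hη)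
      (fun ξ => hidA hβ0 hβ1 hE ξ)

end SBaux

namespace SBaux

lemma exch_B_fst {x : St} (hx : x ≠ St.A) : (exch (x, St.B)).1 = St.B := by
  cases x <;> simp_all [exch]

lemma exch_B_snd {x : St} (hx : x ≠ St.A) : (exch (x, St.B)).2 = x := by
  cases x <;> simp_all [exch]

/-- Support of `ν_B`: all even (0-indexed) sites carry `B`, no site carries `A`. -/
def SuppB (L : ℕ) : Set (Cfg L) :=
  {η | ∀ j : Fin L, ((j : ℕ) % 2 = 0 → η j = St.B) ∧ η j ≠ St.A}

/-- The deterministic evolution of a configuration in the support of `ν_B`,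
given the boundary bit `b` (annihilation of the `B` at site `1`). -/
def PhiB (L : ℕ) (η : Cfg L) (b : Bool) : Cfg L := fun j =>
  if (j : ℕ) % 2 = 0 then St.B
  else if h : 2 ≤ (j : ℕ) then η ⟨(j : ℕ) - 2, by have := j.isLt; omega⟩
  else if b then St.vac else St.B

lemma bdryB {L : ℕ} (hE : L % 2 = 0) (hpos : 0 < L) {η : Cfg L} (hη : η ∈ SuppB L)
    (a1 b1 bL : Bool) (j : Fin L) :
    bdry L a1 b1 true bL η j =
      if (j : ℕ) = 0 then (if b1 then St.vac else St.B)
      else if (j : ℕ) = L - 1 then St.B else η j := by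
  obtain ⟨heven, hA⟩ := hη j
  have hjL := j.isLt
  by_cases h0 : (j : ℕ) = 0
  · have hB : η j = St.B := heven (by omega)
    simp [bdry, h0, hB]
  · by_cases hL1 : (j : ℕ) = L - 1
    · rcases hx : η j with _ | _ | _
      · simp [bdry, h0, hL1, hx]
        rw [if_neg (show ¬ (L - 1 = 0) by omega)]
        rw [if_neg (show ¬ (L - 1 = 0) by omega)]
      · exact absurd hx hA
      · simp [bdry, h0, hL1, hx]
    · simp [bdry, h0, hL1]

lemma chiB {L : ℕ} (hE : L % 2 = 0) (hpos : 0 < L) {η : Cfg L} (hη : η ∈ SuppB L)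
    (a1 b1 bL : Bool) (j : Fin L) :
    sweep1 L (bdry L a1 b1 true bL η) j =
      if (j : ℕ) % 2 = 0 then
        (if h : 2 ≤ (j : ℕ) then η ⟨(j : ℕ) - 1, by have := j.isLt; omega⟩
         else if b1 then St.vac else St.B)
      else St.B := by
  have hjL := j.isLt
  by_cases hj : (j : ℕ) % 2 = 1
  · by_cases h2 : (j : ℕ) + 2 < L
    · rw [sweep1, dif_pos ⟨hj, h2⟩]
      rw [bdryB hE hpos hη a1 b1 bL j, bdryB hE hpos hη a1 b1 bL ⟨(j : ℕ) + 1, by omega⟩]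
      simp only [Fin.val_mk]
      rw [if_neg (show ¬ ((j : ℕ) = 0) by omega),
        if_neg (show ¬ ((j : ℕ) = L - 1) by omega),
        if_neg (show ¬ ((j : ℕ) + 1 = 0) by omega),
        if_neg (show ¬ ((j : ℕ) + 1 = L - 1) by omega)]
      rw [(hη ⟨(j : ℕ) + 1, by omega⟩).1 (by simp only [Fin.val_mk]; omega)]
      rw [if_neg (show ¬ ((j : ℕ) % 2 = 0) by omega)]
      exact exch_B_fst (hη j).2
    · have hL1 : (j : ℕ) = L - 1 := by omega
      rw [sweep1, dif_neg (by omega), dif_neg (by omega)]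
      rw [bdryB hE hpos hη a1 b1 bL j, if_neg (show ¬ ((j : ℕ) = 0) by omega),
        if_pos hL1, if_neg (show ¬ ((j : ℕ) % 2 = 0) by omega)]
  · by_cases h0 : (j : ℕ) = 0
    · rw [sweep1, dif_neg (by omega), dif_neg (by omega)]
      rw [bdryB hE hpos hη a1 b1 bL j, if_pos h0]
      rw [if_pos (show (j : ℕ) % 2 = 0 by omega), dif_neg (show ¬ (2 ≤ (j : ℕ)) by omega)]
    · have h1 : (j : ℕ) + 1 < L := by omega
      rw [sweep1, dif_neg (by omega), dif_pos ⟨by omega, by omega, h1⟩]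
      rw [bdryB hE hpos hη a1 b1 bL ⟨(j : ℕ) - 1, by omega⟩,
        bdryB hE hpos hη a1 b1 bL j]
      simp only [Fin.val_mk]
      rw [if_neg (show ¬ ((j : ℕ) - 1 = 0) by omega),
        if_neg (show ¬ ((j : ℕ) - 1 = L - 1) by omega),
        if_neg (show ¬ ((j : ℕ) = 0) from h0),
        if_neg (show ¬ ((j : ℕ) = L - 1) by omega)]
      rw [(hη j).1 (by omega)]
      rw [if_pos (show (j : ℕ) % 2 = 0 by omega), dif_pos (show 2 ≤ (j : ℕ) by omega)]
      exact exch_B_snd (hη _).2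

set_option maxHeartbeats 1000000 in
lemma dynB {L : ℕ} (hE : L % 2 = 0) (hpos : 0 < L) {η : Cfg L} (hη : η ∈ SuppB L)
    (a1 b1 bL : Bool) :
    sweep2 L (sweep1 L (bdry L a1 b1 true bL η)) = PhiB L η b1 := by
  funext j
  have hjL := j.isLt
  by_cases hj : (j : ℕ) % 2 = 0
  · have h1 : (j : ℕ) + 1 < L := by omega
    rw [sweep2, dif_pos ⟨hj, h1⟩]
    rw [chiB hE hpos hη a1 b1 bL j, chiB hE hpos hη a1 b1 bL ⟨(j : ℕ) + 1, by omega⟩]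
    simp only [Fin.val_mk]
    rw [if_pos hj, if_neg (show ¬ (((j : ℕ) + 1) % 2 = 0) by omega)]
    simp only [PhiB]
    rw [if_pos hj]
    by_cases h2 : 2 ≤ (j : ℕ)
    · rw [dif_pos h2]
      exact exch_B_fst (hη _).2
    · rw [dif_neg h2]
      cases b1 <;> simp [exch]
  · rw [sweep2, dif_neg (show ¬ ((j : ℕ) % 2 = 0 ∧ (j : ℕ) + 1 < L) by omega),
      dif_pos (show (j : ℕ) % 2 = 1 by omega)]
    rw [chiB hE hpos hη a1 b1 bL ⟨(j : ℕ) - 1, by omega⟩, chiB hE hpos hη a1 b1 bL j]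
    simp only [Fin.val_mk]
    rw [if_neg hj, if_pos (show ((j : ℕ) - 1) % 2 = 0 by omega)]
    simp only [PhiB]
    rw [if_neg hj]
    by_cases h2 : 2 ≤ (j : ℕ)
    · rw [dif_pos (show 2 ≤ (j : ℕ) - 1 by omega), dif_pos h2]
      exact exch_B_snd (hη _).2
    · rw [dif_neg (show ¬ (2 ≤ (j : ℕ) - 1) by omega), dif_neg h2]
      cases b1 <;> simp [exch]

lemma stepB {L : ℕ} (β : ℝ) (hE : L % 2 = 0) (hpos : 0 < L) {η : Cfg L}
    (hη : η ∈ SuppB L) :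
    stepPMF L 1 β η = (bern β).bind fun b => PMF.pure (PhiB L η b) := by
  rw [stepPMF, bern_one]
  simp only [PMF.pure_bind, dynB hE hpos hη, PMF.bind_const]

end SBaux

namespace SBaux

lemma mB_even {β : ℝ} {L : ℕ} {j : Fin L} (hj : (j : ℕ) % 2 = 0) :
    brokenSiteMeasureB β L j = Measure.dirac St.B := if_pos hj

lemma mB_odd {β : ℝ} {L : ℕ} {j : Fin L} (hj : (j : ℕ) % 2 = 1) :
    brokenSiteMeasureB β L j =
      ENNReal.ofReal (1 - β) • Measure.dirac St.B + ENNReal.ofReal β • Measure.dirac St.vac :=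
  if_neg (by omega)

lemma mixB_apply (β : ℝ) (s : Set St) :
    (ENNReal.ofReal (1 - β) • Measure.dirac St.B + ENNReal.ofReal β • Measure.dirac St.vac) s
      = ENNReal.ofReal (1 - β) * s.indicator 1 St.B + ENNReal.ofReal β * s.indicator 1 St.vac := by
  simp [Measure.dirac_apply]

lemma mB_prob (β : ℝ) (h0 : 0 ≤ β) (h1 : β ≤ 1) (L : ℕ) (j : Fin L) :
    IsProbabilityMeasure (brokenSiteMeasureB β L j) := by
  constructor
  by_cases hj : (j : ℕ) % 2 = 0
  · rw [mB_even hj]; simp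
  · rw [mB_odd (by omega), mixB_apply]
    simp [one_sub_add h0 h1]

lemma nullB (β : ℝ) (h0 : 0 ≤ β) (h1 : β ≤ 1) (L : ℕ) :
    Measure.pi (brokenSiteMeasureB β L) (SuppB L)ᶜ = 0 := by
  haveI := mB_prob β h0 h1 L
  have hSupp : SuppB L = Set.univ.pi
      (fun j : Fin L => if (j : ℕ) % 2 = 0 then ({St.B} : Set St) else {St.B, St.vac}) := by
    ext η
    simp only [SuppB, Set.mem_setOf_eq, Set.mem_pi, Set.mem_univ, true_implies]
    refine forall_congr' fun j => ?_
    by_cases hj : (j : ℕ) % 2 = 0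
    · rw [if_pos hj]; cases η j <;> simp [hj]
    · rw [if_neg hj]; cases η j <;> simp [hj]
  rw [hSupp, prob_compl_eq_zero_iff (MeasurableSet.univ_pi fun j => .of_discrete),
    Measure.pi_pi]
  apply Finset.prod_eq_one
  intro j _
  by_cases hj : (j : ℕ) % 2 = 0
  · rw [if_pos hj, mB_even hj]; simp
  · rw [if_neg hj, mB_odd (by omega), mixB_apply]
    simp [one_sub_add h0 h1]

/-- Constraint sets for the preimage of a configuration under `PhiB`. -/
def TB (L : ℕ) (ξ : Cfg L) : Fin L → Set St := fun j =>
  if h : (j : ℕ) % 2 = 1 ∧ (j : ℕ) + 2 < L then {ξ ⟨(j : ℕ) + 2, h.2⟩} else Set.univ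

/-- Compatibility condition for `ξ` to be reachable. -/
def PB (L : ℕ) (ξ : Cfg L) (b : Bool) : Prop :=
  ∀ j : Fin L, ((j : ℕ) % 2 = 0 → ξ j = St.B) ∧
    ((j : ℕ) % 2 = 1 → ¬ (2 ≤ (j : ℕ)) → ξ j = (if b then St.vac else St.B))

lemma setB_pos {L : ℕ} {ξ : Cfg L} {b : Bool} (h : PB L ξ b) :
    {η : Cfg L | PhiB L η b = ξ} = Set.univ.pi (TB L ξ) := by
  ext η
  simp only [Set.mem_setOf_eq, Set.mem_pi, Set.mem_univ, true_implies]
  constructor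
  · intro hΦ j
    rw [TB]
    split_ifs with hc
    · obtain ⟨hc1, hc2⟩ := hc
      have hjL := j.isLt
      have h1 := congrFun hΦ ⟨(j : ℕ) + 2, by omega⟩
      simp only [PhiB, Fin.val_mk] at h1
      rw [if_neg (by omega), dif_pos (by omega : 2 ≤ (j : ℕ) + 2)] at h1
      exact Set.mem_singleton_iff.2 h1
    · trivial
  · intro hT
    funext j
    have hjL := j.isLt
    simp only [PhiB]
    by_cases hj : (j : ℕ) % 2 = 0
    · rw [if_pos hj]; exact ((h j).1 hj).symm
    · rw [if_neg hj]
      by_cases h2 : 2 ≤ (j : ℕ)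
      · rw [dif_pos h2]
        have h3 := hT ⟨(j : ℕ) - 2, by omega⟩
        rw [TB] at h3
        rw [dif_pos ⟨by simp only [Fin.val_mk]; omega, by simp only [Fin.val_mk]; omega⟩] at h3
        rw [Set.mem_singleton_iff] at h3
        rw [h3]
        exact congrArg ξ (Fin.ext (by simp only [Fin.val_mk]; omega))
      · rw [dif_neg h2]
        exact ((h j).2 (by omega) h2).symm

lemma setB_neg {L : ℕ} {ξ : Cfg L} {b : Bool} (h : ¬ PB L ξ b) :
    {η : Cfg L | PhiB L η b = ξ} = ∅ := by
  ext η
  simp only [Set.mem_setOf_eq, Set.mem_empty_iff_false, iff_false]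
  intro hΦ
  apply h
  intro j
  constructor
  · intro hj
    rw [← hΦ]; simp [PhiB, hj]
  · intro h1 h2
    rw [← hΦ]
    simp only [PhiB]
    rw [if_neg (by omega), dif_neg h2]

/-- The reindexing permutation: odd sites are shifted up by two (cyclically),
even sites are fixed. -/
def rhoB (L : ℕ) (hL2 : 2 ≤ L) (hE : L % 2 = 0) : Equiv.Perm (Fin L) where
  toFun j := if h : (j : ℕ) % 2 = 1 ∧ (j : ℕ) + 2 < L then ⟨(j : ℕ) + 2, by omega⟩
    else if (j : ℕ) % 2 = 1 then ⟨1, by omega⟩ else j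
  invFun j := if h : (j : ℕ) % 2 = 1 ∧ 2 ≤ (j : ℕ) then ⟨(j : ℕ) - 2, by have := j.isLt; omega⟩
    else if (j : ℕ) % 2 = 1 then ⟨L - 1, by omega⟩ else j
  left_inv j := by
    have hjL := j.isLt
    by_cases h1 : (j : ℕ) % 2 = 1 ∧ (j : ℕ) + 2 < L
    · simp only [dif_pos h1, Fin.val_mk]
      rw [dif_pos ⟨by omega, by omega⟩]
      exact Fin.ext (by simp only [Fin.val_mk]; omega)
    · by_cases h2 : (j : ℕ) % 2 = 1
      · simp only [dif_neg h1, if_pos h2, Fin.val_mk]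
        rw [dif_neg (by simp), if_pos (by simp)]
        exact Fin.ext (by simp only [Fin.val_mk]; omega)
      · simp only [dif_neg h1, if_neg h2]
        rw [dif_neg (by omega)]
  right_inv j := by
    have hjL := j.isLt
    by_cases h1 : (j : ℕ) % 2 = 1 ∧ 2 ≤ (j : ℕ)
    · simp only [dif_pos h1, Fin.val_mk]
      rw [dif_pos ⟨by omega, by omega⟩]
      exact Fin.ext (by simp only [Fin.val_mk]; omega)
    · by_cases h2 : (j : ℕ) % 2 = 1
      · simp only [dif_neg h1, if_pos h2, Fin.val_mk]
        rw [dif_neg (by omega), if_pos (by omega)]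
        exact Fin.ext (by simp only [Fin.val_mk]; omega)
      · simp only [dif_neg h1, if_neg h2]
        rw [dif_neg (by omega)]

lemma rhoB_apply (L : ℕ) (hL2 : 2 ≤ L) (hE : L % 2 = 0) (j : Fin L) :
    rhoB L hL2 hE j =
      if h : (j : ℕ) % 2 = 1 ∧ (j : ℕ) + 2 < L then ⟨(j : ℕ) + 2, by omega⟩
      else if (j : ℕ) % 2 = 1 then ⟨1, by omega⟩ else j := rfl

set_option maxHeartbeats 1000000 in
lemma prod_shift_up {M : Type*} [CommMonoid M] {L : ℕ} (hL2 : 2 ≤ L) (hE : L % 2 = 0)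
    (G F : Fin L → M) (c : M)
    (heven : ∀ j : Fin L, (j : ℕ) % 2 = 0 → G j = 1 ∧ F j = 1)
    (hshift : ∀ (j : Fin L) (h1 : (j : ℕ) % 2 = 1) (h2 : (j : ℕ) + 2 < L),
      F j = G ⟨(j : ℕ) + 2, h2⟩)
    (hFtop : F ⟨L - 1, by omega⟩ = 1)
    (hc : c = G ⟨1, by omega⟩) :
    ∏ j, G j = c * ∏ j, F j := by
  have h1' : (∏ j, G j) = ∏ j, G (rhoB L hL2 hE j) :=
    (Equiv.prod_comp (rhoB L hL2 hE) G).symm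
  have hz : (⟨L - 1, by omega⟩ : Fin L) ∈ Finset.univ := Finset.mem_univ _
  have hρ0 : rhoB L hL2 hE ⟨L - 1, by omega⟩ = ⟨1, by omega⟩ := by
    rw [rhoB_apply]
    simp only [Fin.val_mk]
    rw [dif_neg (by omega), if_pos (by omega)]
  rw [h1', ← Finset.mul_prod_erase Finset.univ _ hz, hρ0, ← hc]
  congr 1
  have hstep : ∀ j ∈ Finset.univ.erase (⟨L - 1, by omega⟩ : Fin L),
      G (rhoB L hL2 hE j) = F j := by
    intro j hj
    have hjne : (j : ℕ) ≠ L - 1 := by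
      intro hc'
      exact (Finset.mem_erase.1 hj).1 (Fin.ext hc')
    have hjL := j.isLt
    by_cases hpar : (j : ℕ) % 2 = 0
    · have hρj : rhoB L hL2 hE j = j := by
        rw [rhoB_apply, dif_neg (by omega), if_neg (by omega)]
      rw [hρj, (heven j hpar).1, (heven j hpar).2]
    · have hρj : rhoB L hL2 hE j = ⟨(j : ℕ) + 2, by omega⟩ := by
        rw [rhoB_apply, dif_pos ⟨by omega, by omega⟩]
      rw [hρj, hshift j (by omega) (by omega)]
  rw [Finset.prod_congr rfl hstep]
  exact Finset.prod_erase _ hFtop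

end SBaux

namespace SBaux

lemma hidB {L : ℕ} {β : ℝ} (h0 : 0 ≤ β) (h1 : β ≤ 1) (hE : L % 2 = 0) (ξ : Cfg L) :
    ENNReal.ofReal β * Measure.pi (brokenSiteMeasureB β L) {η | PhiB L η true = ξ}
      + ENNReal.ofReal (1 - β) * Measure.pi (brokenSiteMeasureB β L) {η | PhiB L η false = ξ}
      = Measure.pi (brokenSiteMeasureB β L) {ξ} := by
  haveI := mB_prob β h0 h1 L
  have hξ : Measure.pi (brokenSiteMeasureB β L) {ξ} = ∏ j, brokenSiteMeasureB β L j {ξ j} := by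
    rw [← Set.univ_pi_singleton ξ, Measure.pi_pi]
  by_cases heven : ∀ j : Fin L, (j : ℕ) % 2 = 0 → ξ j = St.B
  case neg =>
    push_neg at heven
    obtain ⟨j, hj, hne⟩ := heven
    have hP : ∀ b, ¬ PB L ξ b := fun b hPB => hne ((hPB j).1 hj)
    rw [setB_neg (hP true), setB_neg (hP false), measure_empty, mul_zero, mul_zero,
      add_zero, hξ]
    symm
    apply Finset.prod_eq_zero (Finset.mem_univ j)
    rw [mB_even hj, Measure.dirac_apply]
    simp [Set.indicator_apply, Ne.symm hne]
  case pos =>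
    rcases Nat.eq_zero_or_pos L with hL0 | hLpos
    · subst hL0
      have hP : ∀ b, PB 0 ξ b := fun b j => absurd j.isLt (by omega)
      rw [setB_pos (hP true), setB_pos (hP false), hξ]
      simp only [Measure.pi_pi]
      simp only [Finset.univ_eq_empty, Finset.prod_empty, mul_one]
      rw [add_comm, one_sub_add h0 h1]
    · have hL2 : 2 ≤ L := by omega
      set i : Fin L := ⟨1, by omega⟩ with hi
      have hival : (i : ℕ) = 1 := rfl
      have hiodd : (i : ℕ) % 2 = 1 := by omega
      have hPBiff : ∀ b, PB L ξ b ↔ ξ i = (if b then St.vac else St.B) := by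
        intro b
        constructor
        · intro hPB
          exact (hPB i).2 (by omega) (by omega)
        · intro hv j
          refine ⟨fun hj => heven j hj, fun hj1 hj2 => ?_⟩
          have hji : j = i := Fin.ext (by omega)
          rw [hji]; exact hv
      have hprod : (∏ j, brokenSiteMeasureB β L j {ξ j})
          = brokenSiteMeasureB β L i {ξ i} * ∏ j, brokenSiteMeasureB β L j (TB L ξ j) := by
        apply prod_shift_up hL2 hE
        · intro j hj
          constructor
          · rw [mB_even hj, heven j hj, Measure.dirac_apply]
            simp
          · rw [TB, dif_neg (by omega)]
            exact measure_univ
        · intro j hj1 hj2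
          rw [TB, dif_pos ⟨hj1, hj2⟩, mB_odd hj1,
            mB_odd (show ((⟨(j : ℕ) + 2, hj2⟩ : Fin L) : ℕ) % 2 = 1 by
              simp only [Fin.val_mk]; omega)]
        · rw [TB, dif_neg (by simp only [Fin.val_mk]; omega)]
          exact measure_univ
        · rfl
      rcases hv : ξ i with _ | _ | _
      · -- ξ i = vac
        have hPf : ¬ PB L ξ false := fun hPB => by
          have h' := (hPBiff false).1 hPB
          rw [hv] at h'
          simp at h'
        rw [setB_pos ((hPBiff true).2 (by simp [hv])), setB_neg hPf, measure_empty,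
          mul_zero, add_zero, Measure.pi_pi, hξ, hprod]
        congr 1
        rw [mB_odd hiodd, hv, mixB_apply]
        simp [Set.indicator_apply]
      · -- ξ i = A
        have hPt : ¬ PB L ξ true := fun hPB => by
          have h' := (hPBiff true).1 hPB
          rw [hv] at h'
          simp at h'
        have hPf : ¬ PB L ξ false := fun hPB => by
          have h' := (hPBiff false).1 hPB
          rw [hv] at h'
          simp at h'
        rw [setB_neg hPt, setB_neg hPf, measure_empty, mul_zero, mul_zero, add_zero, hξ]
        symm
        apply Finset.prod_eq_zero (Finset.mem_univ i)
        rw [mB_odd hiodd, hv, mixB_apply]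
        simp [Set.indicator_apply]
      · -- ξ i = B
        have hPt : ¬ PB L ξ true := fun hPB => by
          have h' := (hPBiff true).1 hPB
          rw [hv] at h'
          simp at h'
        rw [setB_pos ((hPBiff false).2 (by simp [hv])), setB_neg hPt, measure_empty,
          mul_zero, zero_add, Measure.pi_pi, hξ, hprod]
        congr 1
        rw [mB_odd hiodd, hv, mixB_apply]
        simp [Set.indicator_apply]

lemma invariantB (β : ℝ) (hβ0 : 0 ≤ β) (hβ1 : β ≤ 1) (L : ℕ) (hE : L % 2 = 0) :
    (Measure.pi (brokenSiteMeasureB β L)).bind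
      (fun η => (stepPMF L 1 β η).toMeasure) = Measure.pi (brokenSiteMeasureB β L) := by
  rcases Nat.eq_zero_or_pos L with hL0 | hLpos
  · subst hL0
    refine invariant_of β hβ0 hβ1 0 _ (mB_prob β hβ0 hβ1 0) (SuppB 0) ?_ (PhiB 0) ?_
      (fun ξ => hidB hβ0 hβ1 hE ξ)
    · have hS : SuppB 0 = Set.univ := by
        ext η
        simp only [SuppB, Set.mem_setOf_eq, Set.mem_univ, iff_true]
        exact fun j => j.elim0
      rw [hS, Set.compl_univ]; exact measure_empty
    · intro η hη
      apply PMF.ext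
      intro x
      have huniq : ∀ (p : PMF (Cfg 0)) (a : Cfg 0), p a = 1 := by
        intro p a
        have h := p.tsum_coe
        rwa [tsum_eq_single a (fun b hb => absurd (Subsingleton.elim b a) hb)] at h
      rw [huniq, huniq]
  · exact invariant_of β hβ0 hβ1 L _ (mB_prob β hβ0 hβ1 L) (SuppB L)
      (nullB β hβ0 hβ1 L) (PhiB L) (fun η hη => stepB β hE hLpos hη)
      (fun ξ => hidB hβ0 hβ1 hE ξ)

end SBaux


/-- **The two symmetry-broken product measures are invariant on the line `α = 1`.**
For `α = 1` and `0 < β < 1`, both `ν_A` and `ν_B` are invariant for the sublattice bridge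
chain: `ν_A K_{L,1,β} = ν_A` and `ν_B K_{L,1,β} = ν_B`.  In each of these stationary
states one species is completely expelled from the system even on a finite lattice. -/
theorem broken_measures_invariant_alpha_one (β : ℝ) (hβ0 : 0 < β) (hβ1 : β < 1)
    (L : ℕ) (hL : Even L) :
    ((Measure.pi (brokenSiteMeasureA β L)).bind
        (fun η => (stepPMF L 1 β η).toMeasure) = Measure.pi (brokenSiteMeasureA β L)) ∧
    ((Measure.pi (brokenSiteMeasureB β L)).bind
        (fun η => (stepPMF L 1 β η).toMeasure) = Measure.pi (brokenSiteMeasureB β L)) := by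
  have hE : L % 2 = 0 := Nat.even_iff.mp hL
  exact ⟨SBaux.invariantA β hβ0.le hβ1.le L hE, SBaux.invariantB β hβ0.le hβ1.le L hE⟩
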